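/- arXiv:1806.02089 — 3 statements merged into one kernel-verified Lean document; each statement's English description precedes it below -/
import Mathlib

section
/- Let γ > 0, a > 0 and ν ∈ ℂ satisfy Re ν = (1 + γ/(2a)) |ν|². Define ℘ = γν/(2a), p₊ = |1 − ℘|², p₋ = |℘|² and 𝔣 = γ|ν|²/a. Then p₊ + p₋ = 1 − 𝔣, 0 ≤ 𝔣 ≤ 1, and |ν| ≤ 1. -/
/-!
Writing `℘ = c ν` with `c = γ/(2a) ≥ 0`, the identity `|1 - ℘|² + |℘|² = 1 - 2 Re ℘ + 2 |℘|²`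
together with `Re ν = (1 + c) |ν|²` gives `p₊ + p₋ = 1 - 2c|ν|² = 1 - 𝔣`; since the left side is
nonnegative, `𝔣 ≤ 1`. Finally `|ν|² ≤ (1 + c)|ν|² = Re ν ≤ |ν|` forces `|ν| ≤ 1`.
-/

open Complex

lemma Complex.norm_one_sub_sq_add_norm_sq (z : ℂ) :
    ‖1 - z‖ ^ 2 + ‖z‖ ^ 2 = 1 - 2 * z.re + 2 * ‖z‖ ^ 2 := by
  simp only [Complex.sq_norm, normSq_apply, sub_re, sub_im, one_re, one_im]
  ring

section ReEqMulNormSq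

variable {c : ℝ} {ν : ℂ}

lemma norm_one_sub_ofReal_mul_sq_add_of_re_eq (h : ν.re = (1 + c) * ‖ν‖ ^ 2) :
    ‖1 - (c : ℂ) * ν‖ ^ 2 + ‖(c : ℂ) * ν‖ ^ 2 = 1 - 2 * c * ‖ν‖ ^ 2 := by
  rw [norm_one_sub_sq_add_norm_sq, re_ofReal_mul, h, norm_mul, norm_real, Real.norm_eq_abs,
    mul_pow, sq_abs]
  ring

lemma norm_le_one_of_re_eq (hc : 0 ≤ c) (h : ν.re = (1 + c) * ‖ν‖ ^ 2) : ‖ν‖ ≤ 1 := by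
  have hsq : ‖ν‖ ^ 2 ≤ ‖ν‖ :=
    calc ‖ν‖ ^ 2 ≤ (1 + c) * ‖ν‖ ^ 2 := le_mul_of_one_le_left (sq_nonneg _) (by linarith)
      _ = ν.re := h.symm
      _ ≤ ‖ν‖ := re_le_norm ν
  nlinarith [norm_nonneg ν]

end ReEqMulNormSq

/-- If `γ > 0`, `a > 0` and `ν ∈ ℂ` satisfies `Re ν = (1 + γ/(2a)) |ν|²`, then with
`℘ = γν/(2a)`, `p₊ = |1 - ℘|²`, `p₋ = |℘|²` and `𝔣 = γ|ν|²/a` one has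
`p₊ + p₋ = 1 - 𝔣`, `0 ≤ 𝔣 ≤ 1` and `|ν| ≤ 1`. -/
theorem stmt3 (γ a : ℝ) (hγ : 0 < γ) (ha : 0 < a) (ν : ℂ)
    (h : ν.re = (1 + γ / (2 * a)) * ‖ν‖ ^ 2) :
    ‖1 - (γ : ℂ) * ν / (2 * a)‖ ^ 2 + ‖(γ : ℂ) * ν / (2 * a)‖ ^ 2
        = 1 - γ * ‖ν‖ ^ 2 / a ∧
    0 ≤ γ * ‖ν‖ ^ 2 / a ∧
    γ * ‖ν‖ ^ 2 / a ≤ 1 ∧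
    ‖ν‖ ≤ 1 := by
  set c := γ / (2 * a) with hc_def
  have hc : 0 ≤ c := by positivity
  have hwp : (γ : ℂ) * ν / (2 * a) = (c : ℂ) * ν := by
    rw [hc_def]; push_cast; ring
  have habs : γ * ‖ν‖ ^ 2 / a = 2 * c * ‖ν‖ ^ 2 := by
    rw [hc_def]; field_simp
  have hsum := norm_one_sub_ofReal_mul_sq_add_of_re_eq h
  rw [hwp, habs]
  refine ⟨hsum, by positivity, ?_, norm_le_one_of_re_eq hc h⟩
  linarith [sq_nonneg ‖1 - (c : ℂ) * ν‖, sq_nonneg ‖(c : ℂ) * ν‖]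
end

section
/- There exists a constant C > 0 such that for every ε ∈ (0, 1/2] and every A ∈ ℝ one has ∫₀¹ du/((ε + |u − A|) √u) ≤ C ε^{−1/2} log(1/ε). -/
/-!
Split `(0, 1)` at `ε`. Near the origin `ε + |u - A| ≥ ε` and `∫₀^ε u^{-1/2} du = 2√ε`, which
gives `2 ε^{-1/2}`. On `[ε, 1]` we have `√u ≥ √ε`, and on either side of `A` the function
`1 / (ε + |u - A|)` is dominated by a translate of `1 / (ε + v)`, `v ≥ 0`, so its integral over an
interval of length `L` is at most `2 log (1 + L / ε)`; with `L = 1 - ε` this is `2 log (1 / ε)`.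
The remaining `2 ε^{-1/2}` is absorbed because `log (1 / ε) ≥ log 2`.
-/

open Real intervalIntegral MeasureTheory

section LogBound

variable {ε A a b : ℝ}

theorem continuous_one_div_add_abs_sub (hε : 0 < ε) (A : ℝ) :
    Continuous fun u : ℝ => 1 / (ε + |u - A|) :=
  continuous_const.div (by fun_prop) fun u => by positivity

theorem integral_one_div_add_abs_sub_le_of_le (hε : 0 < ε) (hAa : A ≤ a) (hab : a ≤ b) :
    ∫ u in a..b, 1 / (ε + |u - A|) ≤ log (1 + (b - a) / ε) := by
  have hcmp : ContinuousOn (fun u : ℝ => 1 / (u - (a - ε))) (Set.uIcc a b) := by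
    rw [Set.uIcc_of_le hab]
    exact continuousOn_const.div (by fun_prop) fun u hu => by linarith [hu.1]
  calc ∫ u in a..b, 1 / (ε + |u - A|)
      ≤ ∫ u in a..b, 1 / (u - (a - ε)) := by
        refine integral_mono_on hab ((continuous_one_div_add_abs_sub hε A).intervalIntegrable a b)
          hcmp.intervalIntegrable fun u hu => ?_
        refine one_div_le_one_div_of_le (by linarith [hu.1]) ?_
        linarith [le_abs_self (u - A)]
    _ = log (1 + (b - a) / ε) := by
        rw [integral_comp_sub_right (fun x => 1 / x),
          integral_one_div_of_pos (by linarith) (by linarith), sub_sub_cancel, one_add_div hε.ne']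
        ring_nf

theorem integral_one_div_add_abs_sub_le_of_ge (hε : 0 < ε) (hbA : b ≤ A) (hab : a ≤ b) :
    ∫ u in a..b, 1 / (ε + |u - A|) ≤ log (1 + (b - a) / ε) := by
  have hreflect : ∫ u in a..b, 1 / (ε + |u - A|)
      = ∫ u in (2 * A - b)..(2 * A - a), 1 / (ε + |u - A|) := by
    rw [← integral_comp_sub_left (fun u => 1 / (ε + |u - A|))]
    congr 1 with u
    rw [abs_sub_comm]
    ring_nf
  have := integral_one_div_add_abs_sub_le_of_le (A := A) (a := 2 * A - b) (b := 2 * A - a) hε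
    (by linarith) (by linarith)
  rw [hreflect]
  rwa [show 2 * A - a - (2 * A - b) = b - a by ring] at this

theorem integral_one_div_add_abs_sub_le (hε : 0 < ε) (A : ℝ) (hab : a ≤ b) :
    ∫ u in a..b, 1 / (ε + |u - A|) ≤ 2 * log (1 + (b - a) / ε) := by
  have hlog : ∀ {c d}, c ≤ d → d ≤ b → a ≤ c → log (1 + (d - c) / ε) ≤ log (1 + (b - a) / ε) :=
    fun hcd hdb hac => log_le_log (by positivity) (by gcongr)
  have hlog0 : 0 ≤ log (1 + (b - a) / ε) :=
    log_nonneg (le_add_of_nonneg_right (div_nonneg (sub_nonneg.2 hab) hε.le))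
  have hcont := continuous_one_div_add_abs_sub hε A
  rcases le_total A a with hAa | haA
  · linarith [integral_one_div_add_abs_sub_le_of_le hε hAa hab, hlog0]
  rcases le_total b A with hbA | hAb
  · linarith [integral_one_div_add_abs_sub_le_of_ge hε hbA hab, hlog0]
  rw [← integral_add_adjacent_intervals (hcont.intervalIntegrable a A)
    (hcont.intervalIntegrable A b)]
  linarith [integral_one_div_add_abs_sub_le_of_ge hε le_rfl haA, hlog haA hAb le_rfl,
    integral_one_div_add_abs_sub_le_of_le hε le_rfl hAb, hlog hAb le_rfl haA]

end LogBound

section SqrtWeight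

variable {ε A δ b u : ℝ}

theorem rpow_neg_one_half_eq_inv_sqrt (hu : 0 ≤ u) : u ^ (-(1 : ℝ) / 2) = (√u)⁻¹ := by
  rw [neg_div, rpow_neg hu, sqrt_eq_rpow]

theorem one_div_add_abs_sub_mul_sqrt_le (hε : 0 < ε) (hu : 0 < u) :
    1 / ((ε + |u - A|) * √u) ≤ ε⁻¹ * u ^ (-(1 : ℝ) / 2) := by
  rw [rpow_neg_one_half_eq_inv_sqrt hu.le, ← mul_inv, ← one_div]
  gcongr
  exact le_add_of_nonneg_right (abs_nonneg _)

theorem intervalIntegrable_one_div_add_abs_sub_mul_sqrt (hε : 0 < ε) (A : ℝ) (hb : 0 ≤ b) :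
    IntervalIntegrable (fun u => 1 / ((ε + |u - A|) * √u)) volume 0 b := by
  have hdom : IntervalIntegrable (fun u : ℝ => ε⁻¹ * u ^ (-(1 : ℝ) / 2)) volume 0 b :=
    (intervalIntegrable_rpow' (by norm_num)).const_mul _
  refine hdom.mono_fun (Measurable.aestronglyMeasurable (by fun_prop)) ?_
  rw [Set.uIoc_of_le hb, Filter.EventuallyLE, ae_restrict_iff' measurableSet_Ioc]
  refine Filter.Eventually.of_forall fun u ⟨hu, _⟩ => ?_
  rw [norm_of_nonneg (by positivity), norm_of_nonneg (by positivity)]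
  exact one_div_add_abs_sub_mul_sqrt_le hε hu

theorem integral_one_div_add_abs_sub_mul_sqrt_from_zero_le (hε : 0 < ε) (A : ℝ) (hδ : 0 ≤ δ) :
    ∫ u in 0..δ, 1 / ((ε + |u - A|) * √u) ≤ 2 * √δ / ε := by
  calc ∫ u in 0..δ, 1 / ((ε + |u - A|) * √u)
      ≤ ∫ u in 0..δ, ε⁻¹ * u ^ (-(1 : ℝ) / 2) :=
        integral_mono_on_of_le_Ioo hδ (intervalIntegrable_one_div_add_abs_sub_mul_sqrt hε A hδ)
          ((intervalIntegrable_rpow' (by norm_num)).const_mul _)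
          fun u hu => one_div_add_abs_sub_mul_sqrt_le hε hu.1
    _ = 2 * √δ / ε := by
        rw [intervalIntegral.integral_const_mul, integral_rpow (Or.inl (by norm_num)),
          sqrt_eq_rpow, zero_rpow (by norm_num)]
        norm_num
        ring

theorem integral_one_div_add_abs_sub_mul_sqrt_le_of_pos (hε : 0 < ε) (A : ℝ) (hδ : 0 < δ)
    (hδb : δ ≤ b) :
    ∫ u in δ..b, 1 / ((ε + |u - A|) * √u) ≤ (√δ)⁻¹ * (2 * log (1 + (b - δ) / ε)) := by
  have hcont : ContinuousOn (fun u => 1 / ((ε + |u - A|) * √u)) (Set.uIcc δ b) := by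
    rw [Set.uIcc_of_le hδb]
    refine continuousOn_const.div (by fun_prop) fun u hu => ?_
    have : 0 < u := hδ.trans_le hu.1
    positivity
  calc ∫ u in δ..b, 1 / ((ε + |u - A|) * √u)
      ≤ ∫ u in δ..b, (√δ)⁻¹ * (1 / (ε + |u - A|)) := by
        refine integral_mono_on hδb hcont.intervalIntegrable
          (((continuous_one_div_add_abs_sub hε A).intervalIntegrable δ b).const_mul _)
          fun u hu => ?_
        rw [mul_comm (ε + _), ← one_div_mul_one_div, one_div]
        gcongr
        exact hu.1
    _ ≤ (√δ)⁻¹ * (2 * log (1 + (b - δ) / ε)) := by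
        rw [intervalIntegral.integral_const_mul]
        gcongr
        exact integral_one_div_add_abs_sub_le hε A hδb

end SqrtWeight

/-- There is `C > 0` such that for every `ε ∈ (0, 1/2]` and every `A ∈ ℝ`,
`∫₀¹ du/((ε + |u - A|) √u) ≤ C ε^{-1/2} log(1/ε)`. -/
theorem stmt8 : ∃ C : ℝ, 0 < C ∧ ∀ ε : ℝ, ε ∈ Set.Ioc (0 : ℝ) (1 / 2) → ∀ A : ℝ,
    (∫ u in Set.Ioo (0 : ℝ) 1, 1 / ((ε + |u - A|) * Real.sqrt u))
      ≤ C * ε ^ (-(1 : ℝ) / 2) * Real.log (1 / ε) := by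
  refine ⟨5, by norm_num, ?_⟩
  rintro ε ⟨hε, hε2⟩ A
  have hint := intervalIntegrable_one_div_add_abs_sub_mul_sqrt hε A zero_le_one
  have hε01 : ε ∈ Set.uIcc (0 : ℝ) 1 := Set.mem_uIcc_of_le hε.le (by linarith)
  rw [← integral_Ioc_eq_integral_Ioo, ← integral_of_le zero_le_one,
    ← integral_add_adjacent_intervals (hint.mono_set (Set.uIcc_subset_uIcc_left hε01))
      (hint.mono_set (Set.uIcc_subset_uIcc_right hε01)),
    rpow_neg_one_half_eq_inv_sqrt hε.le]
  have hnear := integral_one_div_add_abs_sub_mul_sqrt_from_zero_le hε A hε.le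
  have hfar := integral_one_div_add_abs_sub_mul_sqrt_le_of_pos (b := 1) hε A hε (by linarith)
  rw [mul_div_assoc, sqrt_div_self] at hnear
  rw [show 1 + (1 - ε) / ε = 1 / ε by field_simp; ring] at hfar
  have hlog : log 2 ≤ log (1 / ε) := log_le_log two_pos (by rw [le_div_iff₀ hε]; linarith)
  calc _ ≤ (√ε)⁻¹ * (2 + 2 * log (1 / ε)) := by linarith
    _ ≤ (√ε)⁻¹ * (5 * log (1 / ε)) := by gcongr; linarith [log_two_gt_d9]
    _ = 5 * (√ε)⁻¹ * log (1 / ε) := by ring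
end

section
/- For every M > 0 there exist δ₀ ∈ (0,1) and ε₀ ∈ (0,1) such that for all β ∈ (−δ₀, δ₀) and all ε ∈ (0, ε₀) one has |∫₀¹ dv/(√v · (iε + β + v))| > M. -/
/-!
Write `K(v) = 1 / (√v (v + β + iε))`, so `Re K = (β + v) / (√v ((β + v)² + ε²))` and
`-Im K = ε / (√v ((β + v)² + ε²))`, and `K` is dominated by `ε⁻¹ v^(-1/2)`.
If `β < ε`, on a window `(u, u + ε)` with `u = max 0 (-β)` we have `0 ≤ β + v ≤ 2ε`, so
`-Im K ≥ 1 / (5 ε √(u + ε))` there and `-Im ∫ K ≥ 1 / (5 √(u + ε))`.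
If `β ≥ ε`, then `Re K ≥ 0` and on `(β, 2β)` it is at least `1 / (5 β √(2β))`, so
`Re ∫ K ≥ 1 / (5 √(2β))`. Both bounds blow up as `β, ε → 0`.
-/

open MeasureTheory Set Complex

lemma integrableOn_inv_sqrt_Ioo {t : ℝ} (ht : 0 < t) :
    IntegrableOn (fun v : ℝ => (√v)⁻¹) (Ioo 0 t) := by
  refine ((intervalIntegral.integrableOn_Ioo_rpow_iff ht).2
    (by norm_num : (-1 : ℝ) < -(1 / 2))).congr_fun (fun v hv => ?_) measurableSet_Ioo
  simp only [Real.rpow_neg hv.1.le, Real.sqrt_eq_rpow]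

lemma one_div_ofReal_mul_re (a x y : ℝ) :
    (1 / ((a : ℂ) * (x + y * I))).re = x / (a * (x ^ 2 + y ^ 2)) := by
  rcases eq_or_ne a 0 with rfl | ha
  · simp
  rw [one_div, inv_re, normSq_mul, normSq_ofReal, normSq_add_mul_I, re_ofReal_mul]
  simp only [add_re, ofReal_re, mul_I_re, ofReal_im, neg_zero, add_zero]
  field_simp

lemma one_div_ofReal_mul_im (a x y : ℝ) :
    (1 / ((a : ℂ) * (x + y * I))).im = -(y / (a * (x ^ 2 + y ^ 2))) := by
  rcases eq_or_ne a 0 with rfl | ha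
  · simp
  rw [one_div, inv_im, normSq_mul, normSq_ofReal, normSq_add_mul_I, im_ofReal_mul]
  simp only [add_im, ofReal_im, mul_I_im, ofReal_re, zero_add]
  field_simp

lemma le_setIntegral_of_le_on_Ioo {φ : ℝ → ℝ} {s : Set ℝ} {a b k : ℝ} (hab : a ≤ b)
    (hs : MeasurableSet s) (hsub : Ioo a b ⊆ s) (hφ : IntegrableOn φ s)
    (hφ_nonneg : ∀ v ∈ s, 0 ≤ φ v) (hk : ∀ v ∈ Ioo a b, k ≤ φ v) :
    k * (b - a) ≤ ∫ v in s, φ v :=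
  calc k * (b - a) = k * volume.real (Ioo a b) := by
        rw [Real.volume_real_Ioo_of_le hab]
    _ ≤ ∫ v in Ioo a b, φ v :=
        setIntegral_ge_of_const_le_real measurableSet_Ioo measure_Ioo_lt_top.ne hk
          (hφ.mono_set hsub)
    _ ≤ ∫ v in s, φ v :=
        setIntegral_mono_set hφ (ae_restrict_of_forall_mem hs hφ_nonneg) hsub.eventuallyLE

noncomputable def resolventKernel (β ε v : ℝ) : ℂ :=
  1 / ((√v : ℂ) * (I * ε + β + v))

section resolventKernel

variable {β ε : ℝ}

lemma resolventKernel_eq_one_div_ofReal_mul (β ε v : ℝ) :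
    resolventKernel β ε v = 1 / ((√v : ℂ) * ((β + v : ℝ) + ε * I)) := by
  rw [resolventKernel]; push_cast; ring_nf

lemma resolventKernel_re (β ε v : ℝ) :
    (resolventKernel β ε v).re = (β + v) / (√v * ((β + v) ^ 2 + ε ^ 2)) := by
  rw [resolventKernel_eq_one_div_ofReal_mul, one_div_ofReal_mul_re]

lemma resolventKernel_im (β ε v : ℝ) :
    (resolventKernel β ε v).im = -(ε / (√v * ((β + v) ^ 2 + ε ^ 2))) := by
  rw [resolventKernel_eq_one_div_ofReal_mul, one_div_ofReal_mul_im]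

lemma norm_resolventKernel_le (hε : 0 < ε) (v : ℝ) :
    ‖resolventKernel β ε v‖ ≤ ε⁻¹ * (√v)⁻¹ := by
  have hε_le : ε ≤ ‖I * ε + β + v‖ := by
    simpa [abs_of_pos hε] using abs_im_le_norm (I * ε + β + v)
  rw [resolventKernel, norm_div, norm_one, norm_mul, norm_real, Real.norm_of_nonneg
    (Real.sqrt_nonneg v), one_div, mul_inv, mul_comm]
  gcongr

lemma integrableOn_resolventKernel (hε : 0 < ε) :
    IntegrableOn (resolventKernel β ε) (Ioo 0 1) :=
  ((integrableOn_inv_sqrt_Ioo one_pos).const_mul ε⁻¹).mono'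
    (by unfold resolventKernel; exact Measurable.aestronglyMeasurable (by fun_prop))
    (ae_of_all _ (norm_resolventKernel_le hε))

lemma one_div_five_sqrt_le_neg_im_integral_resolventKernel {u : ℝ} (hε : 0 < ε)
    (hu : 0 ≤ u) (hβu : 0 ≤ β + u) (hβuε : β + u ≤ ε) (hle : u + ε ≤ 1) :
    1 / (5 * √(u + ε)) ≤ -(∫ v in Ioo 0 1, resolventKernel β ε v).im := by
  have hK := integrableOn_resolventKernel (β := β) hε
  have him := integral_im hK
  simp only [RCLike.im_to_complex] at him
  have hsqrt : 0 < √(u + ε) := Real.sqrt_pos.2 (by linarith)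
  have hbound : ∀ v ∈ Ioo u (u + ε),
      ε / (√(u + ε) * (5 * ε ^ 2)) ≤ -(resolventKernel β ε v).im := by
    rintro v ⟨hv₁, hv₂⟩
    have hv : 0 < v := by linarith
    have hsq : (β + v) ^ 2 ≤ 4 * ε ^ 2 := by nlinarith
    rw [resolventKernel_im, neg_neg]
    gcongr
    linarith
  calc 1 / (5 * √(u + ε)) = ε / (√(u + ε) * (5 * ε ^ 2)) * (u + ε - u) := by
        field_simp
        ring
    _ ≤ ∫ v in Ioo 0 1, -(resolventKernel β ε v).im :=
        le_setIntegral_of_le_on_Ioo (by linarith) measurableSet_Ioo (Ioo_subset_Ioo hu hle)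
          hK.im.neg (fun v _ => by rw [resolventKernel_im, neg_neg]; positivity) hbound
    _ = -(∫ v in Ioo 0 1, resolventKernel β ε v).im := by rw [integral_neg, him]

lemma one_div_five_sqrt_le_re_integral_resolventKernel (hε : 0 < ε) (hεβ : ε ≤ β)
    (hle : 2 * β ≤ 1) :
    1 / (5 * √(2 * β)) ≤ (∫ v in Ioo 0 1, resolventKernel β ε v).re := by
  have hK := integrableOn_resolventKernel (β := β) hε
  have hre := integral_re hK
  simp only [RCLike.re_to_complex] at hre
  have hβ : 0 < β := by linarith
  have hsqrt : 0 < √(2 * β) := Real.sqrt_pos.2 (by linarith)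
  have hnonneg : ∀ v ∈ Ioo (0 : ℝ) 1, 0 ≤ (resolventKernel β ε v).re := by
    rintro v ⟨hv, -⟩
    have hβv : 0 < β + v := by linarith
    rw [resolventKernel_re]
    positivity
  have hbound : ∀ v ∈ Ioo β (2 * β),
      2 * β / (√(2 * β) * (10 * β ^ 2)) ≤ (resolventKernel β ε v).re := by
    rintro v ⟨hv₁, hv₂⟩
    have hv : 0 < v := by linarith
    have hsq : (β + v) ^ 2 + ε ^ 2 ≤ 10 * β ^ 2 := by nlinarith
    rw [resolventKernel_re]
    gcongr
    linarith
  calc 1 / (5 * √(2 * β)) = 2 * β / (√(2 * β) * (10 * β ^ 2)) * (2 * β - β) := by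
        field_simp
        ring
    _ ≤ ∫ v in Ioo 0 1, (resolventKernel β ε v).re :=
        le_setIntegral_of_le_on_Ioo (by linarith) measurableSet_Ioo
          (Ioo_subset_Ioo hβ.le hle) hK.re hnonneg hbound
    _ = (∫ v in Ioo 0 1, resolventKernel β ε v).re := hre

end resolventKernel

lemma lt_one_div_five_mul_sqrt {M t : ℝ} (ht : 0 < t) (h : 25 * M ^ 2 * t < 1) :
    M < 1 / (5 * √t) := by
  have hsqrt : 0 < √t := Real.sqrt_pos.2 ht
  have habs : |M| * (5 * √t) < 1 := by
    refine (pow_lt_one_iff_of_nonneg (by positivity) two_ne_zero).1 ?_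
    rw [mul_pow, mul_pow, sq_abs, Real.sq_sqrt ht.le]
    linarith
  rw [lt_div_iff₀ (by positivity)]
  nlinarith [le_abs_self M]

/-- For every `M > 0` there exist `δ₀ ∈ (0,1)` and `ε₀ ∈ (0,1)` such that for all
`β ∈ (-δ₀, δ₀)` and all `ε ∈ (0, ε₀)`,
`|∫₀¹ dv/(√v (iε + β + v))| > M`. -/
theorem stmt10 : ∀ M : ℝ, 0 < M →
    ∃ δ₀ ∈ Set.Ioo (0 : ℝ) 1, ∃ ε₀ ∈ Set.Ioo (0 : ℝ) 1,
      ∀ β : ℝ, β ∈ Set.Ioo (-δ₀) δ₀ → ∀ ε : ℝ, ε ∈ Set.Ioo 0 ε₀ →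
        M < ‖(∫ v in Set.Ioo (0 : ℝ) 1,
          1 / ((Real.sqrt v : ℂ) * (Complex.I * ε + β + v)))‖ := by
  intro M _
  set c : ℝ := (50 * (M ^ 2 + 1))⁻¹
  have hc₀ : 0 < c := by positivity
  have hc : 50 * (M ^ 2 + 1) * c = 1 := mul_inv_cancel₀ (by positivity)
  have hc₁ : c < 1 / 2 := by nlinarith [sq_nonneg M]
  have hM : ∀ t, 0 < t → t < 2 * c → M < 1 / (5 * √t) := fun t ht htc =>
    lt_one_div_five_mul_sqrt ht (by nlinarith [sq_nonneg M])
  refine ⟨c, ⟨hc₀, by linarith⟩, c, ⟨hc₀, by linarith⟩, fun β hβ ε hε => ?_⟩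
  obtain ⟨hβ₁, hβ₂⟩ := hβ
  obtain ⟨hε₀, hε₁⟩ := hε
  change M < ‖∫ v in Ioo 0 1, resolventKernel β ε v‖
  have hu : max 0 (-β) < c := max_lt hc₀ (by linarith)
  have hβu : β + max 0 (-β) = max β 0 := by rw [add_max]; simp
  rcases lt_or_ge β ε with hβε | hεβ
  · calc M < 1 / (5 * √(max 0 (-β) + ε)) := hM _ (by positivity) (by linarith)
      _ ≤ -(∫ v in Ioo 0 1, resolventKernel β ε v).im :=
        one_div_five_sqrt_le_neg_im_integral_resolventKernel hε₀ (le_max_left _ _)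
          (by rw [hβu]; exact le_max_right _ _) (by rw [hβu]; exact max_le hβε.le hε₀.le)
          (by linarith)
      _ ≤ _ := (neg_le_abs _).trans (abs_im_le_norm _)
  · calc M < 1 / (5 * √(2 * β)) := hM _ (by linarith) (by linarith)
      _ ≤ (∫ v in Ioo 0 1, resolventKernel β ε v).re :=
        one_div_five_sqrt_le_re_integral_resolventKernel hε₀ hεβ (by linarith)
      _ ≤ _ := (le_abs_self _).trans (abs_re_le_norm _)
end
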